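/- arXiv:1602.08542 — 2 statements merged into one kernel-verified Lean document; each statement's English description precedes it below -/
import Mathlib

section
/- Let S, c, C₁, C₂, P₀ ∈ ℝ and let Z : ℝ → ℝ be three times differentiable with 0 < Z(r) < 1 for all r. Define v₂ = c + C₂/(1−Z), G₂ = (v₂ − c)v₂″ − (v₂′)², P = P₀ + Z − (C₁²/(6Z²))(2 Z Z″ − (Z′)² + 3), E₄ = (v₂ − c)v₂′ − Z′ + S·P′ − (1/3)(1−Z)²·G₂′ + (1−Z)·Z′·G₂, α₀ = S·C₁², α₁ = C₂² − α₀, and Φ₂ = −(1/(2Z(1−Z)²))·[2Z(1−Z)(α₁Z + α₀)Z″ + (α₁Z(1−2Z) + α₀(2−3Z))(3 − (Z′)²) + 3(1−S)Z³(1−Z)²]. Then for all r ∈ ℝ: Φ₂′(r) = 3·Z(r)·E₄(r). -/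
/-!
With K(y) = (2yy″ − y′² + 3)/(2y²) and J(y) = (y′² − 3)/(2y) one has y′·K(y) = J(y)′.
The pressure is P = P₀ + Z − (C₁²/3)·K(Z), and the velocity terms of E₄ collapse to
(C₂²/3)·K(1−Z)′, so E₄ = Φ₁′ for the first integral Φ₁ = (C₂²K(1−Z) − α₀K(Z))/3 − (1−S)Z.
Integrating 3ZΦ₁′ by parts with y′K(y) = J(y)′ (and (1−Z)′ = −Z′) gives
3ZΦ₁′ = (3ZΦ₁ + C₂²J(1−Z) + α₀J(Z) + (3/2)(1−S)Z²)′, and the bracket is exactly Φ₂.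
-/

/-- Lower-layer traveling-wave velocity v₂ = c + C₂/(1 − Z). -/
noncomputable def v2f (c C₂ : ℝ) (Z : ℝ → ℝ) : ℝ → ℝ := fun r => c + C₂ / (1 - Z r)

/-- G₂ = (v₂ − c)v₂″ − (v₂′)². -/
noncomputable def G2f (c C₂ : ℝ) (Z : ℝ → ℝ) : ℝ → ℝ := fun r =>
  (v2f c C₂ Z r - c) * deriv (deriv (v2f c C₂ Z)) r - (deriv (v2f c C₂ Z) r) ^ 2

/-- Pressure integral P = P₀ + Z − (C₁²/(6Z²))(2ZZ″ − (Z′)² + 3). -/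
noncomputable def Pf (P₀ C₁ : ℝ) (Z : ℝ → ℝ) : ℝ → ℝ := fun r =>
  P₀ + Z r - (C₁ ^ 2 / (6 * (Z r) ^ 2)) *
    (2 * Z r * deriv (deriv Z) r - (deriv Z r) ^ 2 + 3)

/-- The reduced lower-layer momentum equation
E₄ = (v₂ − c)v₂′ − Z′ + S·P′ − (1/3)(1−Z)²·G₂′ + (1−Z)·Z′·G₂. -/
noncomputable def E4f (S c C₁ C₂ P₀ : ℝ) (Z : ℝ → ℝ) : ℝ → ℝ := fun r =>
  (v2f c C₂ Z r - c) * deriv (v2f c C₂ Z) r - deriv Z r + S * deriv (Pf P₀ C₁ Z) r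
    - (1/3) * (1 - Z r) ^ 2 * deriv (G2f c C₂ Z) r
    + (1 - Z r) * deriv Z r * G2f c C₂ Z r

/-- The second first integral Φ₂. -/
noncomputable def Phi2f (S α₀ α₁ : ℝ) (Z : ℝ → ℝ) : ℝ → ℝ := fun r =>
  -(1 / (2 * Z r * (1 - Z r) ^ 2)) *
    (2 * Z r * (1 - Z r) * (α₁ * Z r + α₀) * deriv (deriv Z) r
      + (α₁ * Z r * (1 - 2 * Z r) + α₀ * (2 - 3 * Z r)) * (3 - (deriv Z r) ^ 2)
      + 3 * (1 - S) * (Z r) ^ 3 * (1 - Z r) ^ 2)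

noncomputable def Kf (y : ℝ → ℝ) : ℝ → ℝ := fun r =>
  (2 * y r * deriv (deriv y) r - deriv y r ^ 2 + 3) / (2 * y r ^ 2)

noncomputable def Jf (y : ℝ → ℝ) : ℝ → ℝ := fun r => (deriv y r ^ 2 - 3) / (2 * y r)

noncomputable def Phi1f (S C₁ C₂ : ℝ) (Z : ℝ → ℝ) : ℝ → ℝ := fun r =>
  (C₂ ^ 2 * Kf (fun s => 1 - Z s) r - S * C₁ ^ 2 * Kf Z r) / 3 - (1 - S) * Z r

section

variable {y : ℝ → ℝ} {r : ℝ}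

theorem hasDerivAt_Kf (hy : DifferentiableAt ℝ y r) (hy' : DifferentiableAt ℝ (deriv y) r)
    (hy'' : DifferentiableAt ℝ (deriv (deriv y)) r) (h0 : y r ≠ 0) :
    HasDerivAt (Kf y)
      ((y r ^ 2 * deriv (deriv (deriv y)) r - 2 * y r * deriv y r * deriv (deriv y) r
        + deriv y r ^ 3 - 3 * deriv y r) / y r ^ 3) r := by
  have hnum := (((hy.hasDerivAt.const_mul 2).mul hy''.hasDerivAt).sub
    (hy'.hasDerivAt.pow 2)).add_const 3
  have hden := (hy.hasDerivAt.pow 2).const_mul 2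
  refine (hnum.div hden (mul_ne_zero two_ne_zero (pow_ne_zero 2 h0))).congr_deriv ?_
  simp only [Pi.mul_apply, Pi.pow_apply, Pi.sub_apply, Nat.cast_ofNat]
  field_simp
  ring

theorem hasDerivAt_Jf (hy : DifferentiableAt ℝ y r) (hy' : DifferentiableAt ℝ (deriv y) r)
    (h0 : y r ≠ 0) : HasDerivAt (Jf y) (deriv y r * Kf y r) r := by
  have hnum := (hy'.hasDerivAt.pow 2).sub_const 3
  have hden := hy.hasDerivAt.const_mul 2
  refine (hnum.div hden (by positivity)).congr_deriv ?_
  simp only [Kf, Pi.pow_apply, Nat.cast_ofNat]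
  field_simp
  ring

end

section

variable {c C₁ C₂ P₀ S : ℝ} {Z : ℝ → ℝ} {r : ℝ}

theorem deriv_one_sub : deriv (fun s => 1 - Z s) = fun s => -deriv Z s :=
  deriv_const_sub' 1

theorem Pf_eq : Pf P₀ C₁ Z = fun r => P₀ + Z r - C₁ ^ 2 / 3 * Kf Z r := by
  funext r
  simp only [Pf, Kf]
  ring

theorem hasDerivAt_v2f (hZ : DifferentiableAt ℝ Z r) (h1 : 1 - Z r ≠ 0) :
    HasDerivAt (v2f c C₂ Z) (C₂ * deriv Z r / (1 - Z r) ^ 2) r := by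
  refine (((hZ.hasDerivAt.const_sub 1).inv h1).const_mul C₂ |>.const_add c).congr_of_eventuallyEq
    ?_ |>.congr_deriv ?_
  · exact Filter.Eventually.of_forall fun s => by simp [v2f, div_eq_mul_inv]
  · field_simp

theorem deriv_v2f (hZ : Differentiable ℝ Z) (h1 : ∀ s, 1 - Z s ≠ 0) :
    deriv (v2f c C₂ Z) = fun r => C₂ * deriv Z r / (1 - Z r) ^ 2 :=
  funext fun r => (hasDerivAt_v2f (hZ r) (h1 r)).deriv

theorem G2f_eq (hZ : Differentiable ℝ Z) (hZ' : Differentiable ℝ (deriv Z))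
    (h1 : ∀ s, 1 - Z s ≠ 0) :
    G2f c C₂ Z = fun r =>
      C₂ ^ 2 * (deriv (deriv Z) r * (1 - Z r) + deriv Z r ^ 2) / (1 - Z r) ^ 4 := by
  funext r
  have hw := h1 r
  have hv'' : HasDerivAt (fun s => C₂ * deriv Z s / (1 - Z s) ^ 2)
      (C₂ * (deriv (deriv Z) r * (1 - Z r) + 2 * deriv Z r ^ 2) / (1 - Z r) ^ 3) r := by
    refine (((hZ' r).hasDerivAt.const_mul C₂).div (((hZ r).hasDerivAt.const_sub 1).pow 2)
      (pow_ne_zero 2 hw)).congr_deriv ?_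
    simp only [Pi.pow_apply, Nat.cast_ofNat]
    field_simp
    ring
  simp only [G2f, v2f, deriv_v2f hZ h1, hv''.deriv]
  field_simp
  ring

theorem hasDerivAt_G2f (hZ : Differentiable ℝ Z) (hZ' : Differentiable ℝ (deriv Z))
    (hZ'' : DifferentiableAt ℝ (deriv (deriv Z)) r) (h1 : ∀ s, 1 - Z s ≠ 0) :
    HasDerivAt (G2f c C₂ Z)
      (C₂ ^ 2 * ((deriv (deriv (deriv Z)) r * (1 - Z r) + deriv Z r * deriv (deriv Z) r)
          * (1 - Z r) + 4 * deriv Z r * (deriv (deriv Z) r * (1 - Z r) + deriv Z r ^ 2))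
        / (1 - Z r) ^ 5) r := by
  have hw := h1 r
  have hw' := (hZ r).hasDerivAt.const_sub 1
  have hnum := ((hZ''.hasDerivAt.mul hw').add ((hZ' r).hasDerivAt.pow 2)).const_mul (C₂ ^ 2)
  rw [G2f_eq hZ hZ' h1]
  refine (hnum.div (hw'.pow 4) (pow_ne_zero 4 hw)).congr_deriv ?_
  simp only [Pi.add_apply, Pi.mul_apply, Pi.pow_apply, Nat.cast_ofNat]
  field_simp
  ring

theorem hasDerivAt_Phi1f (hZ : Differentiable ℝ Z) (hZ' : Differentiable ℝ (deriv Z))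
    (hZ'' : DifferentiableAt ℝ (deriv (deriv Z)) r) (h0 : Z r ≠ 0) (h1 : ∀ s, 1 - Z s ≠ 0) :
    HasDerivAt (Phi1f S C₁ C₂ Z) (E4f S c C₁ C₂ P₀ Z r) r := by
  have hKZ := hasDerivAt_Kf (hZ r) (hZ' r) hZ'' h0
  have hKw := hasDerivAt_Kf (y := fun s => 1 - Z s) ((hZ r).const_sub 1)
    (by simp only [deriv_one_sub]; exact (hZ' r).neg)
    (by simp only [deriv_one_sub, deriv.fun_neg']; exact hZ''.neg) (h1 r)
  simp only [deriv_one_sub, deriv.fun_neg'] at hKw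
  have hP : deriv (Pf P₀ C₁ Z) r = deriv Z r - C₁ ^ 2 / 3 * deriv (Kf Z) r := by
    rw [Pf_eq, hKZ.deriv]
    exact (((hZ r).hasDerivAt.const_add P₀).sub (hKZ.const_mul (C₁ ^ 2 / 3))).deriv
  refine (((hKw.const_mul (C₂ ^ 2)).sub (hKZ.const_mul (S * C₁ ^ 2))).div_const 3 |>.sub
    ((hZ r).hasDerivAt.const_mul (1 - S))).congr_deriv ?_
  simp only [E4f, hP, hKZ.deriv, deriv_v2f hZ h1, (hasDerivAt_G2f hZ hZ' hZ'' h1).deriv]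
  simp only [G2f_eq hZ hZ' h1, v2f, add_sub_cancel_left]
  field_simp
  ring

theorem Phi2f_eq (h0 : ∀ s, Z s ≠ 0) (h1 : ∀ s, 1 - Z s ≠ 0) :
    Phi2f S (S * C₁ ^ 2) (C₂ ^ 2 - S * C₁ ^ 2) Z = fun r =>
      3 * Z r * Phi1f S C₁ C₂ Z r + C₂ ^ 2 * Jf (fun s => 1 - Z s) r
        + S * C₁ ^ 2 * Jf Z r + 3 / 2 * (1 - S) * Z r ^ 2 := by
  funext r
  have hz := h0 r
  have hw := h1 r
  simp only [Phi2f, Phi1f, Kf, Jf, deriv_one_sub, deriv.fun_neg']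
  field_simp
  ring

theorem hasDerivAt_Phi2f (hZ : Differentiable ℝ Z) (hZ' : Differentiable ℝ (deriv Z))
    (hZ'' : DifferentiableAt ℝ (deriv (deriv Z)) r) (h0 : ∀ s, Z s ≠ 0)
    (h1 : ∀ s, 1 - Z s ≠ 0) :
    HasDerivAt (Phi2f S (S * C₁ ^ 2) (C₂ ^ 2 - S * C₁ ^ 2) Z)
      (3 * Z r * E4f S c C₁ C₂ P₀ Z r) r := by
  have hJw := hasDerivAt_Jf (y := fun s => 1 - Z s) ((hZ r).const_sub 1)
    (by simp only [deriv_one_sub]; exact (hZ' r).neg) (h1 r)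
  have hJZ := hasDerivAt_Jf (hZ r) (hZ' r) (h0 r)
  rw [Phi2f_eq h0 h1]
  have hPhi1 : HasDerivAt (Phi1f S C₁ C₂ Z) (E4f S c C₁ C₂ P₀ Z r) r :=
    hasDerivAt_Phi1f hZ hZ' hZ'' (h0 r) h1
  refine ((((hZ r).hasDerivAt.const_mul 3).mul hPhi1).add (hJw.const_mul (C₂ ^ 2))
    |>.add (hJZ.const_mul (S * C₁ ^ 2))
    |>.add (((hZ r).hasDerivAt.pow 2).const_mul (3 / 2 * (1 - S)))).congr_deriv ?_
  simp only [Phi1f, deriv_one_sub]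
  ring

end

theorem stmt7 (S c C₁ C₂ P₀ : ℝ) (Z : ℝ → ℝ)
    (hZ : Differentiable ℝ Z) (hZ' : Differentiable ℝ (deriv Z))
    (hZ'' : Differentiable ℝ (deriv (deriv Z)))
    (hrange : ∀ r : ℝ, 0 < Z r ∧ Z r < 1) :
    ∀ r : ℝ, deriv (Phi2f S (S * C₁ ^ 2) (C₂ ^ 2 - S * C₁ ^ 2) Z) r
      = 3 * Z r * E4f S c C₁ C₂ P₀ Z r := by
  intro r
  have h0 (s : ℝ) : Z s ≠ 0 := (hrange s).1.ne'
  have h1 (s : ℝ) : 1 - Z s ≠ 0 := sub_ne_zero.mpr (hrange s).2.ne'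
  exact (hasDerivAt_Phi2f hZ hZ' (hZ'' r) h0 h1).deriv
end

section
/- Let S ∈ (0,1) and A₄ = 3(1−S). Let B₁, B₂ ∈ ℝ with B₁ ≠ 0, set α₀ = 0 and α₁ = −(A₄/3)(B₂−1)(B₁+B₂−1)², and assume α₁ ≠ 0 and A₄B₁/(4α₁) > 0. Let γ ∈ ℝ satisfy γ² = A₄B₁/(4α₁), and set A₃ = −A₄(2B₁ + 3B₂), A₂ = A₄(B₂(2B₁+3B₂) + B₁(B₁+2B₂)), A₁ = 3α₁ − (A₂ + A₃ + A₄), A₀ = 0. Then the function Z(r) = B₁·tanh²(γr) + B₂ satisfies, for all r ∈ ℝ: α₁·Z(r)·(Z′(r))² = A₄Z(r)⁴ + A₃Z(r)³ + A₂Z(r)² + A₁Z(r). -/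
/-- The solitary-wave profile Z(r) = B₁·tanh²(γr) + B₂. -/
noncomputable def Zsn (B₁ B₂ γ : ℝ) : ℝ → ℝ := fun r => B₁ * (Real.tanh (γ * r)) ^ 2 + B₂

/-!
With `t = tanh (γ r)` one has `Z - B₂ = B₁ t²`, `Z - B₁ - B₂ = -B₁ (1 - t²)` and
`Z' = 2 B₁ γ t (1 - t²)`, so `γ² = A₄ B₁ / (4 α₁)` turns `α₁ Z Z'²` into
`A₄ Z (Z - B₂) (Z - B₁ - B₂)²`. Expanding this quartic gives `A₄, A₃, A₂` directly, and its
linear coefficient `-A₄ B₂ (B₁ + B₂)²` equals `A₁` because `α₁` is one third of its value at `Z = 1`.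
-/

open Real

theorem Real.hasDerivAt_tanh (x : ℝ) : HasDerivAt tanh (1 - tanh x ^ 2) x := by
  have hcosh : cosh x ≠ 0 := (cosh_pos x).ne'
  have h := (hasDerivAt_sinh x).div (hasDerivAt_cosh x) hcosh
  rw [show sinh / cosh = tanh by funext y; exact (tanh_eq_sinh_div_cosh y).symm] at h
  refine h.congr_deriv ?_
  rw [tanh_eq_sinh_div_cosh]
  field_simp

theorem hasDerivAt_Zsn (B₁ B₂ γ r : ℝ) :
    HasDerivAt (Zsn B₁ B₂ γ) (2 * B₁ * γ * tanh (γ * r) * (1 - tanh (γ * r) ^ 2)) r := by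
  have htanh : HasDerivAt (fun r => tanh (γ * r)) ((1 - tanh (γ * r) ^ 2) * (γ * 1)) r :=
    (hasDerivAt_tanh (γ * r)).comp r ((hasDerivAt_id r).const_mul γ)
  refine ((htanh.pow 2).const_mul B₁ |>.add_const B₂).congr_deriv ?_
  ring

theorem Zsn_mul_deriv_sq {B₁ B₂ γ α A : ℝ} (hγ : 4 * α * γ ^ 2 = A * B₁) (r : ℝ) :
    α * Zsn B₁ B₂ γ r * deriv (Zsn B₁ B₂ γ) r ^ 2 =
      A * Zsn B₁ B₂ γ r * (Zsn B₁ B₂ γ r - B₂) * (Zsn B₁ B₂ γ r - B₁ - B₂) ^ 2 := by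
  rw [(hasDerivAt_Zsn B₁ B₂ γ r).deriv, Zsn]
  set t := tanh (γ * r)
  linear_combination (B₁ ^ 2 * t ^ 2 * (1 - t ^ 2) ^ 2 * (B₁ * t ^ 2 + B₂)) * hγ

theorem factored_quartic_eq {A₄ A₃ A₂ A₁ B₁ B₂ α₁ : ℝ}
    (hα₁ : α₁ = -(A₄ / 3) * (B₂ - 1) * (B₁ + B₂ - 1) ^ 2)
    (hA₃ : A₃ = -A₄ * (2 * B₁ + 3 * B₂))
    (hA₂ : A₂ = A₄ * (B₂ * (2 * B₁ + 3 * B₂) + B₁ * (B₁ + 2 * B₂)))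
    (hA₁ : A₁ = 3 * α₁ - (A₂ + A₃ + A₄)) (Z : ℝ) :
    A₄ * Z * (Z - B₂) * (Z - B₁ - B₂) ^ 2 = A₄ * Z ^ 4 + A₃ * Z ^ 3 + A₂ * Z ^ 2 + A₁ * Z := by
  subst hA₁ hA₂ hA₃ hα₁
  ring

theorem stmt11_general (A₄ B₁ B₂ α₁ γ A₃ A₂ A₁ : ℝ)
    (hα₁ : α₁ = -(A₄ / 3) * (B₂ - 1) * (B₁ + B₂ - 1) ^ 2)
    (hα₁0 : α₁ ≠ 0)
    (hγ : γ ^ 2 = A₄ * B₁ / (4 * α₁))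
    (hA₃ : A₃ = -A₄ * (2 * B₁ + 3 * B₂))
    (hA₂ : A₂ = A₄ * (B₂ * (2 * B₁ + 3 * B₂) + B₁ * (B₁ + 2 * B₂)))
    (hA₁ : A₁ = 3 * α₁ - (A₂ + A₃ + A₄)) :
    ∀ r : ℝ, α₁ * Zsn B₁ B₂ γ r * (deriv (Zsn B₁ B₂ γ) r) ^ 2
      = A₄ * (Zsn B₁ B₂ γ r) ^ 4 + A₃ * (Zsn B₁ B₂ γ r) ^ 3
        + A₂ * (Zsn B₁ B₂ γ r) ^ 2 + A₁ * Zsn B₁ B₂ γ r := by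
  intro r
  have hγ' : 4 * α₁ * γ ^ 2 = A₄ * B₁ := by
    rw [hγ]
    field_simp
  rw [Zsn_mul_deriv_sq hγ', factored_quartic_eq hα₁ hA₃ hA₂ hA₁]

theorem stmt11 (S A₄ B₁ B₂ α₀ α₁ γ A₃ A₂ A₁ A₀ : ℝ)
    (hS : 0 < S) (hS1 : S < 1) (hA₄ : A₄ = 3 * (1 - S)) (hB₁ : B₁ ≠ 0)
    (hα₀ : α₀ = 0) (hα₁ : α₁ = -(A₄ / 3) * (B₂ - 1) * (B₁ + B₂ - 1) ^ 2)
    (hα₁0 : α₁ ≠ 0) (hpos : A₄ * B₁ / (4 * α₁) > 0)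
    (hγ : γ ^ 2 = A₄ * B₁ / (4 * α₁))
    (hA₃ : A₃ = -A₄ * (2 * B₁ + 3 * B₂))
    (hA₂ : A₂ = A₄ * (B₂ * (2 * B₁ + 3 * B₂) + B₁ * (B₁ + 2 * B₂)))
    (hA₁ : A₁ = 3 * α₁ - (A₂ + A₃ + A₄)) (hA₀ : A₀ = 0) :
    ∀ r : ℝ, α₁ * Zsn B₁ B₂ γ r * (deriv (Zsn B₁ B₂ γ) r) ^ 2
      = A₄ * (Zsn B₁ B₂ γ r) ^ 4 + A₃ * (Zsn B₁ B₂ γ r) ^ 3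
        + A₂ * (Zsn B₁ B₂ γ r) ^ 2 + A₁ * Zsn B₁ B₂ γ r :=
  stmt11_general A₄ B₁ B₂ α₁ γ A₃ A₂ A₁ hα₁ hα₁0 hγ hA₃ hA₂ hA₁
end
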